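/- Let u : ℝ^N → ℝ be a C² function satisfying −Δu + u ≤ 0 and u ≥ 0 on {|x| ≥ R} for some R > 0, with u bounded. Then there exists C > 0 such that u(x) ≤ C e^{−|x|} for all |x| ≥ R. -/

import Mathlib

/-- The Laplacian of a real-valued function on `EuclideanSpace ℝ (Fin N)`. -/
noncomputable def laplacian {N : ℕ} (f : EuclideanSpace ℝ (Fin N) → ℝ)
    (x : EuclideanSpace ℝ (Fin N)) : ℝ :=
  ∑ i : Fin N,
    fderiv ℝ (fun y => fderiv ℝ f y (EuclideanSpace.single i (1 : ℝ))) x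
      (EuclideanSpace.single i (1 : ℝ))

/-!
For `x ≠ 0` the radial function `exp (c‖x‖)` has Laplacian `(c² + c (N - 1)/‖x‖) exp (c‖x‖)`,
so on `{‖x‖ ≥ R}` it satisfies `Δv ≤ v` both for `c = -1` and for a small `c = a > 0`.
Compare `u` with `v = C exp (-‖x‖) + ε exp (a‖x‖)` on an annulus `R ≤ ‖x‖ ≤ ρ`: at an interior
minimum of `w = v - u` one has `0 ≤ Δw ≤ w`, while `w ≥ 0` on the inner sphere by the choice of
`C` and on the outer sphere once `ε exp (aρ) ≥ sup u`. Hence `u ≤ v`, and `ε → 0` gives the bound.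
-/

open Real Filter Topology Set

/-- If `f'' < 0` the second derivative test makes the local minimum a local maximum too,
so `f` is locally constant and `f'' = 0`. -/
theorem IsLocalMin.deriv_deriv_nonneg {f : ℝ → ℝ} {a : ℝ} (hmin : IsLocalMin f a)
    (hc : ContinuousAt f a) : 0 ≤ deriv (deriv f) a := by
  by_contra! hneg
  have hmax : IsLocalMax f a := isLocalMax_of_deriv_deriv_neg hneg hmin.deriv_eq_zero hc
  have hconst : f =ᶠ[𝓝 a] fun _ => f a := by
    filter_upwards [hmin, hmax] with t h₁ h₂ using le_antisymm h₂ h₁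
  rw [hconst.deriv.deriv_eq] at hneg
  simp at hneg

theorem IsLocalMin.fderiv_fderiv_apply_nonneg {E : Type*} [NormedAddCommGroup E]
    [NormedSpace ℝ E] {w : E → ℝ} {x : E} (hmin : IsLocalMin w x) (hw : ContDiffAt ℝ 2 w x)
    (v : E) : 0 ≤ fderiv ℝ (fun y => fderiv ℝ w y v) x v := by
  set ℓ : ℝ → E := fun t => x + t • v
  have hℓ : ∀ t, HasDerivAt ℓ v t := fun t => by
    simpa [ℓ] using ((hasDerivAt_id t).smul_const v).const_add x
  have hℓ0 : ℓ 0 = x := by simp [ℓ]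
  have hdiff : ∀ᶠ t in 𝓝 0, DifferentiableAt ℝ w (ℓ t) := by
    refine (hℓ 0).continuousAt.eventually (hℓ0 ▸ ?_)
    exact (hw.eventually (by simp)).mono fun y hy => hy.differentiableAt (by norm_num)
  have hfirst : deriv (w ∘ ℓ) =ᶠ[𝓝 0] fun t => fderiv ℝ w (ℓ t) v := by
    filter_upwards [hdiff] with t ht
    exact (ht.hasFDerivAt.comp_hasDerivAt t (hℓ t)).deriv
  have hDw : HasFDerivAt (fun y => fderiv ℝ w y v) (fderiv ℝ (fun y => fderiv ℝ w y v) x)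
      (ℓ 0) := hℓ0 ▸ (((hw.fderiv_right (m := 1) (by norm_num)).differentiableAt
        (by norm_num)).clm_apply (differentiableAt_const v)).hasFDerivAt
  have hsecond : HasDerivAt (fun t => fderiv ℝ w (ℓ t) v)
      (fderiv ℝ (fun y => fderiv ℝ w y v) x v) 0 :=
    hDw.comp_hasDerivAt 0 (hℓ 0)
  have hmin' : IsLocalMin (w ∘ ℓ) 0 := (hℓ0 ▸ hmin).comp_continuous (hℓ 0).continuousAt
  have hcont : ContinuousAt (w ∘ ℓ) 0 := (hℓ0 ▸ hw.continuousAt).comp (hℓ 0).continuousAt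
  simpa [hfirst.deriv_eq, hsecond.deriv] using hmin'.deriv_deriv_nonneg hcont

theorem exists_pos_sq_add_mul_le_one {k : ℝ} (hk : 0 ≤ k) : ∃ a > 0, a ^ 2 + a * k ≤ 1 := by
  refine ⟨(1 + k)⁻¹, by positivity, ?_⟩
  have h₁ : (1 + k)⁻¹ * (1 + k) = 1 := inv_mul_cancel₀ (by positivity)
  have h₂ : (1 + k)⁻¹ ≤ 1 := inv_le_one_of_one_le₀ (by linarith)
  nlinarith [mul_le_mul_of_nonneg_left h₂ (inv_nonneg.mpr (by positivity : (0 : ℝ) ≤ 1 + k))]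

theorem hasFDerivAt_norm_of_ne_zero {F : Type*} [NormedAddCommGroup F] [InnerProductSpace ℝ F]
    {x : F} (hx : x ≠ 0) : HasFDerivAt (fun y : F => ‖y‖) (‖x‖⁻¹ • innerSL ℝ x) x := by
  have h := (hasStrictFDerivAt_norm_sq x).hasFDerivAt.sqrt
    (pow_ne_zero 2 (norm_ne_zero_iff.mpr hx))
  simp only [sqrt_sq (norm_nonneg _)] at h
  convert h using 1
  ext v
  simp only [smul_apply, coe_innerSL_apply, smul_eq_mul, one_div,
    mul_inv_rev, nsmul_eq_mul, Nat.cast_ofNat]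
  field_simp

section Euclidean

variable {N : ℕ}

local notation "E" => EuclideanSpace ℝ (Fin N)

open Laplacian in
theorem ContDiffAt.laplacian_eq {f : E → ℝ} {x : E} (hf : ContDiffAt ℝ 2 f x) :
    _root_.laplacian f x = Δ f x := by
  rw [InnerProductSpace.laplacian_eq_iteratedFDeriv_orthonormalBasis f
    (EuclideanSpace.basisFun (Fin N) ℝ)]
  refine Finset.sum_congr rfl fun i _ => ?_
  have hDf : DifferentiableAt ℝ (fderiv ℝ f) x :=
    (hf.fderiv_right (m := 1) (by norm_num)).differentiableAt (by norm_num)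
  simp [iteratedFDeriv_two_apply, fderiv_clm_apply hDf (differentiableAt_const _)]

theorem laplacian_add {f g : E → ℝ} {x : E} (hf : ContDiffAt ℝ 2 f x)
    (hg : ContDiffAt ℝ 2 g x) : laplacian (f + g) x = laplacian f x + laplacian g x := by
  rw [(show ContDiffAt ℝ 2 (f + g) x from hf.add hg).laplacian_eq, hf.laplacian_eq,
    hg.laplacian_eq, hf.laplacian_add hg]

theorem laplacian_sub {f g : E → ℝ} {x : E} (hf : ContDiffAt ℝ 2 f x)
    (hg : ContDiffAt ℝ 2 g x) : laplacian (f - g) x = laplacian f x - laplacian g x := by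
  rw [(show ContDiffAt ℝ 2 (f - g) x from hf.sub hg).laplacian_eq, hf.laplacian_eq,
    hg.laplacian_eq, hf.laplacian_sub hg]

theorem laplacian_smul {f : E → ℝ} {x : E} (c : ℝ) (hf : ContDiffAt ℝ 2 f x) :
    laplacian (c • f) x = c * laplacian f x := by
  rw [(show ContDiffAt ℝ 2 (c • f) x from hf.const_smul c).laplacian_eq, hf.laplacian_eq,
    InnerProductSpace.laplacian_smul c hf, smul_eq_mul]

theorem laplacian_nonneg_of_isLocalMin {w : E → ℝ} {x : E} (hmin : IsLocalMin w x)
    (hw : ContDiffAt ℝ 2 w x) : 0 ≤ laplacian w x :=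
  Finset.sum_nonneg fun _ _ => hmin.fderiv_fderiv_apply_nonneg hw _

theorem innerSL_single (y : E) (i : Fin N) :
    innerSL ℝ y (EuclideanSpace.single i 1) = y i := by
  simp [EuclideanSpace.inner_single_right]

theorem laplacian_comp_norm {h h' : ℝ → ℝ} {h'' : ℝ} {x : E} (hx : x ≠ 0)
    (hh : ∀ᶠ r in 𝓝 ‖x‖, HasDerivAt h (h' r) r) (hh' : HasDerivAt h' h'' ‖x‖) :
    laplacian (fun y => h ‖y‖) x = h'' + (N - 1) / ‖x‖ * h' ‖x‖ := by
  have hx₀ : ‖x‖ ≠ 0 := norm_ne_zero_iff.mpr hx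
  have hnorm : HasFDerivAt (fun y : E => ‖y‖) (‖x‖⁻¹ • innerSL ℝ x) x :=
    hasFDerivAt_norm_of_ne_zero hx
  have hfirst : ∀ i, (fun y => fderiv ℝ (fun z : E => h ‖z‖) y (EuclideanSpace.single i 1))
      =ᶠ[𝓝 x] fun y => h' ‖y‖ * ‖y‖⁻¹ * y i := by
    intro i
    filter_upwards [eventually_ne_nhds hx, continuous_norm.continuousAt.eventually hh]
      with y hy hhy
    have hderiv : HasFDerivAt (fun z : E => h ‖z‖) _ y :=
      hhy.comp_hasFDerivAt y (hasFDerivAt_norm_of_ne_zero hy)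
    rw [hderiv.fderiv]
    simp [innerSL_single, mul_assoc]
  have hsecond : ∀ i, fderiv ℝ (fun y => h' ‖y‖ * ‖y‖⁻¹ * y i) x (EuclideanSpace.single i 1)
      = (h'' * ‖x‖⁻¹ ^ 2 - h' ‖x‖ * ‖x‖⁻¹ ^ 3) * x i ^ 2 + h' ‖x‖ * ‖x‖⁻¹ := by
    intro i
    have hinv := (hasDerivAt_inv hx₀).comp_hasFDerivAt x hnorm
    have hproj := (EuclideanSpace.proj (𝕜 := ℝ) i).hasFDerivAt (x := x)
    have hderiv : HasFDerivAt (fun y : E => h' ‖y‖ * ‖y‖⁻¹ * y i) _ x :=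
      ((hh'.comp_hasFDerivAt x hnorm).mul hinv).mul hproj
    rw [hderiv.fderiv]
    simp only [Pi.mul_apply, Function.comp_apply, neg_smul, smul_neg, smul_add,
      add_apply, smul_apply, PiLp.proj_apply,
      PiLp.single_eq_same, smul_eq_mul, mul_one, neg_apply, innerSL_single,
      inv_pow]
    ring
  have hsum : ∑ i, x i ^ 2 = ‖x‖ ^ 2 := by simp [EuclideanSpace.norm_sq_eq]
  unfold laplacian
  rw [Finset.sum_congr rfl fun i _ => by rw [(hfirst i).fderiv_eq, hsecond],
    Finset.sum_add_distrib, ← Finset.mul_sum, hsum, Finset.sum_const, Finset.card_univ,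
    Fintype.card_fin, nsmul_eq_mul]
  field_simp
  ring

theorem laplacian_exp_mul_norm (c : ℝ) {x : E} (hx : x ≠ 0) :
    laplacian (fun y => exp (c * ‖y‖)) x = (c ^ 2 + c * ((N - 1) / ‖x‖)) * exp (c * ‖x‖) := by
  have hderiv : ∀ r, HasDerivAt (fun r => exp (c * r)) (c * exp (c * r)) r := fun r => by
    simpa [mul_comm] using ((hasDerivAt_id r).const_mul c).exp
  refine (laplacian_comp_norm hx (Eventually.of_forall hderiv)
    ((hderiv ‖x‖).const_mul c)).trans ?_
  ring

theorem laplacian_exp_mul_norm_le {c : ℝ} {x : E} (hx : x ≠ 0)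
    (hc : c ^ 2 + c * ((N - 1) / ‖x‖) ≤ 1) :
    laplacian (fun y => exp (c * ‖y‖)) x ≤ exp (c * ‖x‖) := by
  rw [laplacian_exp_mul_norm c hx]
  exact mul_le_of_le_one_left (exp_pos _).le hc

theorem contDiffAt_exp_mul_norm (c : ℝ) {x : E} (hx : x ≠ 0) :
    ContDiffAt ℝ 2 (fun y : E => exp (c * ‖y‖)) x :=
  contDiff_exp.contDiffAt.comp x (contDiffAt_const.mul (contDiffAt_norm ℝ hx))

theorem laplacian_smul_add_smul_le {f g : E → ℝ} {x : E} {a b : ℝ} (ha : 0 ≤ a) (hb : 0 ≤ b)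
    (hf : ContDiffAt ℝ 2 f x) (hg : ContDiffAt ℝ 2 g x)
    (hfx : laplacian f x ≤ f x) (hgx : laplacian g x ≤ g x) :
    laplacian (a • f + b • g) x ≤ (a • f + b • g) x := by
  rw [laplacian_add (f := a • f) (g := b • g) (hf.const_smul a) (hg.const_smul b),
    laplacian_smul a hf, laplacian_smul b hg]
  simp only [Pi.add_apply, Pi.smul_apply, smul_eq_mul]
  gcongr

theorem nonneg_of_laplacian_le_self {w : E → ℝ} {K U : Set E} (hK : IsCompact K)
    (hU : IsOpen U) (hUK : U ⊆ K) (hcont : ContinuousOn w K)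
    (hreg : ∀ z ∈ U, ContDiffAt ℝ 2 w z) (hsuper : ∀ z ∈ U, laplacian w z ≤ w z)
    (hfront : ∀ z ∈ K \ U, 0 ≤ w z) {x : E} (hx : x ∈ K) : 0 ≤ w x := by
  obtain ⟨z, hzK, hzmin⟩ := hK.exists_isMinOn ⟨x, hx⟩ hcont
  refine le_trans ?_ (hzmin hx)
  by_cases hzU : z ∈ U
  · have hloc : IsLocalMin w z := hzmin.isLocalMin (mem_of_superset (hU.mem_nhds hzU) hUK)
    exact (laplacian_nonneg_of_isLocalMin hloc (hreg z hzU)).trans (hsuper z hzU)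
  · exact hfront z ⟨hzK, hzU⟩

theorem le_of_le_on_boundary_annulus {u v : E → ℝ} {R ρ : ℝ}
    (hu : ∀ y, ‖y‖ ∈ Icc R ρ → ContDiffAt ℝ 2 u y)
    (hv : ∀ y, ‖y‖ ∈ Icc R ρ → ContDiffAt ℝ 2 v y)
    (hsub : ∀ y, ‖y‖ ∈ Ioo R ρ → u y ≤ laplacian u y)
    (hsuper : ∀ y, ‖y‖ ∈ Ioo R ρ → laplacian v y ≤ v y)
    (hbdry : ∀ y, ‖y‖ = R ∨ ‖y‖ = ρ → u y ≤ v y) {x : E} (hx : ‖x‖ ∈ Icc R ρ) :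
    u x ≤ v x := by
  have hK : IsCompact (norm ⁻¹' Icc R ρ : Set E) :=
    Metric.isCompact_of_isClosed_isBounded (isClosed_Icc.preimage continuous_norm)
      (isBounded_iff_forall_norm_le.2 ⟨ρ, fun y hy => hy.2⟩)
  have hreg : ∀ y, ‖y‖ ∈ Icc R ρ → ContDiffAt ℝ 2 (v - u) y := fun y hy =>
    (hv y hy).sub (hu y hy)
  refine sub_nonneg.mp (nonneg_of_laplacian_le_self (w := v - u) hK
    (isOpen_Ioo.preimage continuous_norm) (preimage_mono Ioo_subset_Icc_self)
    (fun y hy => (hreg y hy).continuousAt.continuousWithinAt)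
    (fun y hy => hreg y (Ioo_subset_Icc_self hy)) (fun y hy => ?_) (fun y hy => ?_) hx)
  · have hyK := Ioo_subset_Icc_self hy
    rw [laplacian_sub (hv y hyK) (hu y hyK)]
    linarith [hsub y hy, hsuper y hy, show (v - u) y = v y - u y from rfl]
  · obtain ⟨⟨hRy, hyρ⟩, hyU⟩ := hy
    have hyR : ‖y‖ = R ∨ ‖y‖ = ρ := by
      by_contra! hne
      exact hyU ⟨hRy.lt_of_ne hne.1.symm, hyρ.lt_of_ne hne.2⟩
    exact sub_nonneg.mpr (hbdry y hyR)

noncomputable def expBarrier (C ε a : ℝ) : E → ℝ :=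
  C • (fun y => exp (-1 * ‖y‖)) + ε • fun y => exp (a * ‖y‖)

theorem expBarrier_apply (C ε a : ℝ) (y : E) :
    expBarrier C ε a y = C * exp (-‖y‖) + ε * exp (a * ‖y‖) := by
  simp [expBarrier]

theorem contDiffAt_expBarrier (C ε a : ℝ) {y : E} (hy : y ≠ 0) :
    ContDiffAt ℝ 2 (expBarrier C ε a) y :=
  ((contDiffAt_exp_mul_norm _ hy).const_smul C).add ((contDiffAt_exp_mul_norm _ hy).const_smul ε)

theorem laplacian_expBarrier_le (hN : 1 ≤ N) {R C ε a : ℝ} (hR : 0 < R) (hC : 0 ≤ C)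
    (hε : 0 ≤ ε) (ha : 0 ≤ a) (haR : a ^ 2 + a * ((N - 1) / R) ≤ 1) {y : E} (hy : R ≤ ‖y‖) :
    laplacian (expBarrier C ε a) y ≤ expBarrier C ε a y := by
  have hy₀ : y ≠ 0 := norm_pos_iff.mp (hR.trans_le hy)
  have hN₀ : (0 : ℝ) ≤ N - 1 := by simpa using hN
  have hyR : (N - 1) / ‖y‖ ≤ (N - 1) / R := div_le_div_of_nonneg_left hN₀ hR hy
  refine laplacian_smul_add_smul_le hC hε (contDiffAt_exp_mul_norm _ hy₀)
    (contDiffAt_exp_mul_norm _ hy₀) (laplacian_exp_mul_norm_le hy₀ ?_)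
    (laplacian_exp_mul_norm_le hy₀ ?_)
  · linarith [div_nonneg hN₀ (norm_nonneg y)]
  · nlinarith

theorem le_expBarrier (hN : 1 ≤ N) {u : E → ℝ} {R M C ε a : ℝ} (hR : 0 < R)
    (hu : ContDiff ℝ 2 u) (hsub : ∀ y, R ≤ ‖y‖ → u y ≤ laplacian u y) (hM : ∀ y, u y ≤ M)
    (hC : 0 ≤ C) (hCR : M ≤ C * exp (-R)) (hε : 0 < ε) (ha : 0 < a)
    (haR : a ^ 2 + a * ((N - 1) / R) ≤ 1) {x : E} (hx : R ≤ ‖x‖) :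
    u x ≤ expBarrier C ε a x := by
  obtain ⟨ρ, hρM, hρx⟩ : ∃ ρ, M ≤ ε * exp (a * ρ) ∧ ‖x‖ ≤ ρ :=
    ((((tendsto_exp_atTop.comp (tendsto_id.const_mul_atTop ha)).const_mul_atTop
      hε).eventually_ge_atTop M).and (eventually_ge_atTop ‖x‖)).exists
  refine le_of_le_on_boundary_annulus (fun y _ => hu.contDiffAt)
    (fun y hy => contDiffAt_expBarrier C ε a (norm_pos_iff.mp (hR.trans_le hy.1)))
    (fun y hy => hsub y hy.1.le)
    (fun y hy => laplacian_expBarrier_le hN hR hC hε.le ha.le haR hy.1.le)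
    ?_ ⟨hx, hρx⟩
  rintro y (hyR | hyρ) <;> rw [expBarrier_apply]
  · have : 0 ≤ ε * exp (a * R) := by positivity
    rw [hyR]
    linarith [hM y]
  · have : 0 ≤ C * exp (-ρ) := by positivity
    rw [hyρ]
    linarith [hM y]

end Euclidean

theorem stmt_11_general (N : ℕ) (hN : 1 ≤ N) (R : ℝ) (hR : 0 < R)
    (u : EuclideanSpace ℝ (Fin N) → ℝ) (hu : ContDiff ℝ 2 u)
    (hsub : ∀ x, R ≤ ‖x‖ → -laplacian u x + u x ≤ 0)
    (hbdd : ∃ M : ℝ, ∀ x, |u x| ≤ M) :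
    ∃ C : ℝ, 0 < C ∧ ∀ x, R ≤ ‖x‖ → u x ≤ C * Real.exp (-‖x‖) := by
  obtain ⟨M, hM⟩ := hbdd
  have hM₀ : 0 ≤ M := (abs_nonneg _).trans (hM 0)
  obtain ⟨a, ha, haR⟩ := exists_pos_sq_add_mul_le_one
    (div_nonneg (by simpa using hN) hR.le : (0 : ℝ) ≤ (N - 1) / R)
  have hCR : M ≤ (M + 1) * exp R * exp (-R) := by
    rw [mul_assoc, ← exp_add, add_neg_cancel, exp_zero]
    linarith
  refine ⟨(M + 1) * exp R, by positivity, fun x hx => le_of_forall_pos_le_add fun η hη => ?_⟩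
  have hbarrier := le_expBarrier hN hR hu (fun y hy => by linarith [hsub y hy])
    (fun y => (le_abs_self _).trans (hM y)) (by positivity) hCR
    (ε := η / exp (a * ‖x‖)) (by positivity) ha haR hx
  rwa [expBarrier_apply, div_mul_cancel₀ _ (exp_pos _).ne'] at hbarrier

theorem stmt_11 (N : ℕ) (hN : 1 ≤ N) (R : ℝ) (hR : 0 < R)
    (u : EuclideanSpace ℝ (Fin N) → ℝ) (hu : ContDiff ℝ 2 u)
    (hsub : ∀ x, R ≤ ‖x‖ → -laplacian u x + u x ≤ 0)
    (hnonneg : ∀ x, R ≤ ‖x‖ → 0 ≤ u x)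
    (hbdd : ∃ M : ℝ, ∀ x, |u x| ≤ M) :
    ∃ C : ℝ, 0 < C ∧ ∀ x, R ≤ ‖x‖ → u x ≤ C * Real.exp (-‖x‖) :=
  stmt_11_general N hN R hR u hu hsub hbdd
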